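/- Let $n$ be a positive integer and let $t$ be a real number with $-1 \le t < 1$ and $t \ne 0$. Then $\sum_{k=1}^{\infty} \frac{t^k}{k \binom{n+k}{k}} = \frac{1}{1-t} \sum_{k=1}^{n} \big(H_k + H_{n-k} - H_n\big)\Big(\frac{t-1}{t}\Big)^k + \sum_{k=1}^{n} \frac{1}{k}\Big(\frac{t-1}{t}\Big)^{k-1} - \Big(\frac{t-1}{t}\Big)^n \log(1-t)$. -/

import Mathlib

/-!
Write `S_n(t) = ∑_{k ≥ 1} t^k / (k C(n+k,k))`. The coefficients satisfy
`1/(k C(n+1+k,k)) = 1/(k C(n+k,k)) - 1/((k+1) C(n+k+1,k+1))`, hence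
`t S_{n+1}(t) = (t-1) S_n(t) + t/(n+1)`. Starting from `S_0(t) = -log(1-t)`, this recurrence
gives `S_n(t) = ∑_{k<n} r^k/(n-k) - r^n log(1-t)` with `r = (t-1)/t` for `|t| < 1`. For `n ≥ 1`
the coefficients telescope to a convergent sum, so the series converges uniformly on `[-1, 1]` and
the formula extends to `t = -1` by continuity. Finally, `c_k = H_k + H_{n-k} - H_n` vanishes at
`k = 0` and `k = n` and `c_k - c_{k+1} = 1/(n-k) - 1/(k+1)`, so summation by parts against `c`
turns `∑_{k<n} r^k/(n-k)` into the two finite sums of the statement.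
-/

/-- The `n`-th harmonic number `H_n = ∑_{k=1}^n 1/k`, with `H_0 = 0`. -/
noncomputable def H (n : ℕ) : ℝ := ∑ i ∈ Finset.range n, (1 : ℝ) / (i + 1)

open Finset

lemma H_succ (n : ℕ) : H (n + 1) = H n + 1 / (n + 1) := by
  simp [H, sum_range_succ]

lemma sum_Icc_one_eq_sum_range {M : Type*} [AddCommMonoid M] (f : ℕ → M) (n : ℕ) :
    ∑ k ∈ Icc 1 n, f k = ∑ k ∈ range n, f (k + 1) := by
  rw [range_eq_Ico, sum_Ico_add' f 0 n 1, zero_add, Ico_add_one_right_eq_Icc]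

noncomputable def invChooseCoeff (n k : ℕ) : ℝ :=
  1 / (((k : ℝ) + 1) * (Nat.choose (n + (k + 1)) (k + 1) : ℝ))

lemma invChooseCoeff_nonneg (n k : ℕ) : 0 ≤ invChooseCoeff n k := by
  unfold invChooseCoeff; positivity

lemma invChooseCoeff_le_one (n k : ℕ) : invChooseCoeff n k ≤ 1 := by
  have hC : (1 : ℝ) ≤ Nat.choose (n + (k + 1)) (k + 1) := by
    exact_mod_cast Nat.choose_pos (by omega)
  have hk : (1 : ℝ) ≤ k + 1 := by simp
  exact div_le_one_of_le₀ (one_le_mul_of_one_le_of_one_le hk hC) (by positivity)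

lemma invChooseCoeff_zero_right (n : ℕ) : invChooseCoeff n 0 = 1 / (n + 1) := by
  simp [invChooseCoeff]

lemma invChooseCoeff_succ_left (n k : ℕ) :
    invChooseCoeff (n + 1) k = invChooseCoeff n k - invChooseCoeff n (k + 1) := by
  simp only [invChooseCoeff]
  rw [show n + 1 + (k + 1) = (k + 1) + (n + 1) by ring, show n + (k + 1) = (k + 1) + n by ring,
    show n + (k + 1 + 1) = (k + 1 + 1) + n by ring, Nat.cast_add_choose, Nat.cast_add_choose,
    Nat.cast_add_choose, show k + 1 + (n + 1) = k + 1 + n + 1 by ring,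
    show k + 1 + 1 + n = k + 1 + n + 1 by ring]
  simp only [Nat.factorial_succ (k + 1 + n), Nat.factorial_succ (k + 1), Nat.factorial_succ n]
  push_cast
  field_simp
  ring

noncomputable def invChooseSeries (n : ℕ) (t : ℝ) : ℝ :=
  ∑' k, t ^ (k + 1) * invChooseCoeff n k

lemma summable_invChooseCoeff_succ (n : ℕ) : Summable (invChooseCoeff (n + 1)) := by
  refine summable_of_sum_range_le (c := invChooseCoeff n 0) (invChooseCoeff_nonneg _)
    fun K => ?_
  simp only [invChooseCoeff_succ_left, sum_range_sub']
  linarith [invChooseCoeff_nonneg n K]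

lemma summable_pow_mul_invChooseCoeff {t : ℝ} (ht : |t| < 1) (n : ℕ) :
    Summable fun k => t ^ (k + 1) * invChooseCoeff n k := by
  refine Summable.of_norm_bounded (g := fun k => |t| ^ (k + 1))
    ((summable_geometric_of_lt_one (abs_nonneg t) ht).comp_injective (add_left_injective 1))
    fun k => ?_
  rw [norm_mul, norm_pow, Real.norm_eq_abs, Real.norm_of_nonneg (invChooseCoeff_nonneg n k)]
  exact mul_le_of_le_one_right (by positivity) (invChooseCoeff_le_one n k)

lemma invChooseSeries_zero {t : ℝ} (ht : |t| < 1) : invChooseSeries 0 t = -Real.log (1 - t) := by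
  refine ((Real.hasSum_pow_div_log_of_abs_lt_one ht).congr_fun fun k => ?_).tsum_eq
  simp [invChooseCoeff, div_eq_mul_inv]

lemma mul_invChooseSeries_succ {n : ℕ} {t : ℝ}
    (h : Summable fun k => t ^ (k + 1) * invChooseCoeff n k) :
    t * invChooseSeries (n + 1) t = (t - 1) * invChooseSeries n t + t / (n + 1) := by
  have hshift := (summable_nat_add_iff 1).mpr h
  calc t * invChooseSeries (n + 1) t
      = ∑' k, (t * (t ^ (k + 1) * invChooseCoeff n k)
          - t ^ (k + 1 + 1) * invChooseCoeff n (k + 1)) := by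
        rw [invChooseSeries, ← tsum_mul_left]
        exact tsum_congr fun k => by rw [invChooseCoeff_succ_left]; ring
    _ = t * invChooseSeries n t - (invChooseSeries n t - t ^ (0 + 1) * invChooseCoeff n 0) := by
        rw [(h.mul_left t).tsum_sub hshift, tsum_mul_left, invChooseSeries, h.tsum_eq_zero_add]
        ring
    _ = (t - 1) * invChooseSeries n t + t / (n + 1) := by
        rw [invChooseCoeff_zero_right]; ring

lemma eq_pow_mul_add_sum_of_succ {x : ℕ → ℝ} {r : ℝ}
    (h : ∀ n : ℕ, x (n + 1) = r * x n + 1 / (n + 1)) (n : ℕ) :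
    x n = r ^ n * x 0 + ∑ k ∈ range n, r ^ k / (n - k) := by
  induction n with
  | zero => simp
  | succ n ih =>
    rw [h, ih, sum_range_succ', mul_add, mul_sum]
    push_cast
    simp only [add_sub_add_right_eq_sub, pow_succ', mul_div_assoc, pow_zero, sub_zero]
    ring

lemma invChooseSeries_eq_of_abs_lt_one {t : ℝ} (ht : |t| < 1) (ht0 : t ≠ 0) (n : ℕ) :
    invChooseSeries n t = ((t - 1) / t) ^ n * -Real.log (1 - t)
      + ∑ k ∈ range n, ((t - 1) / t) ^ k / (n - k) := by
  rw [eq_pow_mul_add_sum_of_succ (x := fun n => invChooseSeries n t) (fun n => ?_) n,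
    invChooseSeries_zero ht]
  apply mul_left_cancel₀ ht0
  rw [mul_invChooseSeries_succ (summable_pow_mul_invChooseCoeff ht n)]
  field_simp

lemma continuousOn_invChooseSeries_succ (n : ℕ) :
    ContinuousOn (invChooseSeries (n + 1)) (Set.Icc (-1) 1) := by
  refine continuousOn_tsum (fun k => by fun_prop) (summable_invChooseCoeff_succ n)
    fun k t ht => ?_
  rw [norm_mul, norm_pow, Real.norm_of_nonneg (invChooseCoeff_nonneg _ _)]
  exact mul_le_of_le_one_left (invChooseCoeff_nonneg _ _)
    (pow_le_one₀ (norm_nonneg t) (abs_le.2 ht))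

lemma invChooseSeries_eq {n : ℕ} (hn : 0 < n) {t : ℝ} (ht0 : -1 ≤ t) (ht1 : t < 1)
    (ht : t ≠ 0) :
    invChooseSeries n t = ((t - 1) / t) ^ n * -Real.log (1 - t)
      + ∑ k ∈ range n, ((t - 1) / t) ^ k / (n - k) := by
  rcases ht0.eq_or_lt with rfl | ht0'
  · obtain ⟨m, rfl⟩ := Nat.exists_eq_add_one_of_ne_zero hn.ne'
    have heq : Set.EqOn (invChooseSeries (m + 1))
        (fun t => ((t - 1) / t) ^ (m + 1) * -Real.log (1 - t)
          + ∑ k ∈ range (m + 1), ((t - 1) / t) ^ k / ((m + 1 : ℕ) - k)) (Set.Ioo (-1) 0) :=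
      fun t ht =>
        invChooseSeries_eq_of_abs_lt_one (abs_lt.2 ⟨ht.1, by linarith [ht.2]⟩) ht.2.ne _
    refine heq.of_subset_closure ((continuousOn_invChooseSeries_succ m).mono ?_) ?_
      Set.Ioo_subset_Ico_self ?_ (Set.left_mem_Ico.2 (by norm_num))
    · exact Set.Icc_subset_Icc_right (by norm_num) |>.trans' Set.Ico_subset_Icc_self
    · have hx0 : ∀ x ∈ Set.Ico (-1 : ℝ) 0, x ≠ 0 := fun x hx => hx.2.ne
      have hx1 : ∀ x ∈ Set.Ico (-1 : ℝ) 0, 1 - x ≠ 0 := fun x hx =>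
        (sub_pos.2 (hx.2.trans one_pos)).ne'
      fun_prop (disch := assumption)
    · rw [closure_Ioo (by norm_num)]; exact Set.Ico_subset_Icc_self
  · exact invChooseSeries_eq_of_abs_lt_one (abs_lt.2 ⟨ht0', ht1⟩) ht n

lemma sum_range_pow_div_eq {r : ℝ} (hr : r ≠ 0) (n : ℕ) :
    ∑ k ∈ range n, r ^ k / (n - k)
      = (r - 1) / r * ∑ k ∈ Icc 1 n, (H k + H (n - k) - H n) * r ^ k
        + ∑ k ∈ Icc 1 n, 1 / (k : ℝ) * r ^ (k - 1) := by
  set c : ℕ → ℝ := fun k => H k + H (n - k) - H n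
  have hdiff : ∀ k < n, c k - c (k + 1) = 1 / (n - k) - 1 / (k + 1) := by
    intro k hk
    obtain ⟨m, rfl⟩ := Nat.exists_eq_add_of_lt hk
    simp only [c, show k + m + 1 - k = m + 1 by omega, show k + m + 1 - (k + 1) = m by omega,
      H_succ]
    push_cast
    ring
  have htel : ∑ k ∈ range n, (c (k + 1) * r ^ (k + 1) - c k * r ^ k) = 0 := by
    rw [sum_range_sub (fun k => c k * r ^ k)]
    simp [c, H]
  have hparts : ∑ k ∈ range n, (c k - c (k + 1)) * r ^ k
      = (r - 1) / r * ∑ k ∈ range n, c (k + 1) * r ^ (k + 1) := by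
    rw [mul_sum, ← sub_zero (∑ k ∈ range n, (r - 1) / r * _), ← htel, ← sum_sub_distrib]
    refine sum_congr rfl fun k _ => ?_
    field_simp
    ring
  rw [sum_Icc_one_eq_sum_range, sum_Icc_one_eq_sum_range, ← hparts, ← sum_add_distrib]
  refine sum_congr rfl fun k hk => ?_
  rw [hdiff k (mem_range.1 hk), Nat.add_sub_cancel]
  push_cast
  ring

/-- For `n` a positive integer and real `t` with `-1 ≤ t < 1`, `t ≠ 0`,
`∑_{k=1}^∞ t^k/(k C(n+k,k)) = (1/(1-t)) ∑_{k=1}^n (H_k+H_{n-k}-H_n)((t-1)/t)^k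
  + ∑_{k=1}^n (1/k)((t-1)/t)^{k-1} - ((t-1)/t)^n log(1-t)`. -/
theorem binom_series_lin (n : ℕ) (hn : 0 < n) (t : ℝ) (ht0 : -1 ≤ t) (ht1 : t < 1)
    (ht : t ≠ 0) :
    ∑' k : ℕ, t ^ (k + 1) / (((k : ℝ) + 1) * (Nat.choose (n + (k + 1)) (k + 1) : ℝ)) =
      1 / (1 - t) * (∑ k ∈ Finset.Icc 1 n, (H k + H (n - k) - H n) * ((t - 1) / t) ^ k) +
        (∑ k ∈ Finset.Icc 1 n, 1 / (k : ℝ) * ((t - 1) / t) ^ (k - 1)) -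
        ((t - 1) / t) ^ n * Real.log (1 - t) := by
  have ht1' : t - 1 ≠ 0 := sub_ne_zero.2 ht1.ne
  have hcoeff : 1 / (1 - t) = ((t - 1) / t - 1) / ((t - 1) / t) := by
    rw [← neg_sub t 1]
    field_simp
    ring
  rw [show (∑' k : ℕ, _) = invChooseSeries n t from tsum_congr fun k => div_eq_mul_one_div _ _,
    invChooseSeries_eq hn ht0 ht1 ht, sum_range_pow_div_eq (div_ne_zero ht1' ht), hcoeff]
  ring
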